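/- Let (x(·), λ(·)) be a trajectory of the algorithm, let (x*, λ*) satisfy the optimality conditions, and let k satisfy 0 < k < 1/(α λ_max(L_n)), where λ_max(L_n) is the largest eigenvalue of L_n. Then there exists a symmetric positive definite matrix Q ∈ ℝ^{nq×nq} such that for almost every t ≥ 0 the real function t ↦ V*(x(t), λ(t)), where V* = V₁* + k V₂*, is differentiable at t and d/dt V*(x(t), λ(t)) ≤ −k‖ẋ(t)‖² − ⟨λ̇(t), Q λ̇(t)⟩ ≤ 0. -/

import Mathlib

/-
Along the flow, `V₁*` decreases at least at rate `α ⟪x, L x⟫`: the variational inequality of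
the projection onto the tangent cone, the subgradient inequalities at `x(t)` and `x*` and the
optimality conditions add up, using `L x* = 0`, to `⟪x - x*, ẋ⟫ + ⟪λ - λ*, λ̇⟫ ≤ -α ⟪x, L x⟫`.
Moreau's identity `⟪u, P_T u⟫ = ‖P_T u‖²` for the projection onto a cone `T` gives exactly
`d/dt V₂* = ‖λ̇‖² - ‖ẋ‖²`. As the spectrum of `L` lies in `[0, λ_max]`,
`‖λ̇‖² = α² ‖L x‖² ≤ α² λ_max ⟪x, L x⟫`, so `Q = (1 / (α λ_max) - k) • 1` works.

Differentiability of `t ↦ 𝐟(x(t))` a.e. comes from `𝐟` being convex, hence locally Lipschitz,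
so that `𝐟 ∘ x` is locally a difference of monotone functions; at such `t` its derivative is
`⟪g, ẋ⟫` for every subgradient `g`, because `t` minimises `𝐟(x(·)) - ⟪g, x(·)⟫`.
-/

open Matrix MeasureTheory Filter

noncomputable section

variable {E : Type*} [NormedAddCommGroup E] [InnerProductSpace ℝ E]

/-- Subdifferential of a real-valued function. -/
def subdiff (h : E → ℝ) (x : E) : Set E :=
  {g | ∀ y, h x + (inner ℝ g (y - x) : ℝ) ≤ h y}

/-- Normal cone of a set `K` at `x`. -/
def normalCone (K : Set E) (x : E) : Set E :=
  {d | ∀ y ∈ K, (inner ℝ d (y - x) : ℝ) ≤ 0}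

/-- Tangent cone of a set `K` at `x`. -/
def tangentCone (K : Set E) (x : E) : Set E :=
  closure {d | ∃ t : ℝ, 0 < t ∧ x + t • d ∈ K}

/-- `p` is the metric projection of `u` onto `K`. -/
def IsProjOn (K : Set E) (u p : E) : Prop :=
  p ∈ K ∧ ∀ v ∈ K, ‖u - p‖ ≤ ‖u - v‖

/-- Local absolute continuity on `[0, ∞)`. -/
def LocAC {F : Type*} [NormedAddCommGroup F] [NormedSpace ℝ F] [CompleteSpace F]
    (φ : ℝ → F) : Prop :=
  (∀ᵐ t ∂(volume.restrict (Set.Ici (0:ℝ))), DifferentiableAt ℝ φ t) ∧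
  LocallyIntegrableOn (deriv φ) (Set.Ici 0) volume ∧
  ∀ s t : ℝ, 0 ≤ s → s ≤ t → φ t - φ s = ∫ τ in s..t, deriv φ τ

/-- Weighted Laplacian matrix. -/
def lap (n : ℕ) (a : Fin n → Fin n → ℝ) : Matrix (Fin n) (Fin n) ℝ :=
  Matrix.of fun i j => if i = j then ∑ k ∈ Finset.univ.erase i, a i k else - a i j

/-- `L = Lₙ ⊗ I_q`. -/
def bigL (n q : ℕ) (a : Fin n → Fin n → ℝ) :
    Matrix (Fin n × Fin q) (Fin n × Fin q) ℝ :=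
  Matrix.kroneckerMap (· * ·) (lap n a) (1 : Matrix (Fin q) (Fin q) ℝ)

/-- `L` as a linear map on Euclidean space. -/
def Lmap (n q : ℕ) (a : Fin n → Fin n → ℝ) :
    EuclideanSpace ℝ (Fin n × Fin q) →ₗ[ℝ] EuclideanSpace ℝ (Fin n × Fin q) :=
  Matrix.toEuclideanLin (bigL n q a)

/-- `i`-th block of a stacked vector. -/
def blk {n q : ℕ} (x : EuclideanSpace ℝ (Fin n × Fin q)) (i : Fin n) :
    EuclideanSpace ℝ (Fin q) := WithLp.toLp 2 (fun j => x (i, j))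

/-- The product constraint set `Ω = Ω₁ × ⋯ × Ωₙ`. -/
def prodSet (n q : ℕ) (Ω : Fin n → Set (EuclideanSpace ℝ (Fin q))) :
    Set (EuclideanSpace ℝ (Fin n × Fin q)) :=
  {x | ∀ i, blk x i ∈ Ω i}

/-- `𝐟(𝐱) = ∑ᵢ fⁱ(xᵢ)`. -/
def bigF (n q : ℕ) (f : Fin n → EuclideanSpace ℝ (Fin q) → ℝ)
    (x : EuclideanSpace ℝ (Fin n × Fin q)) : ℝ :=
  ∑ i, f i (blk x i)

/-- `1ₙ ⊗ v`. -/
def oneTensor (n q : ℕ) (v : EuclideanSpace ℝ (Fin q)) :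
    EuclideanSpace ℝ (Fin n × Fin q) := WithLp.toLp 2 (fun (p : Fin n × Fin q) => v p.2)


/-- `V₁*(𝐱, λ) = ½‖𝐱 − x*‖² + ½‖λ − λ*‖²`. -/
def V1aux (xs lams u v : E) : ℝ :=
  (1/2) * ‖u - xs‖^2 + (1/2) * ‖v - lams‖^2

/-- `V₂*(𝐱, λ) = 𝐟(𝐱) − 𝐟(x*) + (α/2)⟨𝐱, L𝐱⟩ + α⟨𝐱, Lλ⟩`. -/
def V2aux (n q : ℕ) (α : ℝ) (a : Fin n → Fin n → ℝ)
    (f : Fin n → EuclideanSpace ℝ (Fin q) → ℝ)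
    (xs u v : EuclideanSpace ℝ (Fin n × Fin q)) : ℝ :=
  bigF n q f u - bigF n q f xs + (α/2) * (inner ℝ u (Lmap n q a u) : ℝ) +
    α * (inner ℝ u (Lmap n q a v) : ℝ)

open scoped InnerProductSpace

theorem LinearMap.IsSymmetric.norm_apply_sq_le [FiniteDimensional ℝ E] {T : E →ₗ[ℝ] E}
    (hT : T.IsSymmetric) (hpos : ∀ u, 0 ≤ ⟪u, T u⟫_ℝ) {μ : ℝ}
    (hμ : ∀ ν, Module.End.HasEigenvalue T ν → ν ≤ μ) (u : E) :
    ‖T u‖ ^ 2 ≤ μ * ⟪u, T u⟫_ℝ := by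
  set B := hT.eigenvectorBasis rfl
  set ev := hT.eigenvalues rfl
  have hrepr : ∀ i, B.repr (T u) i = ev i * B.repr u i := by
    simpa using hT.eigenvectorBasis_apply_self_apply rfl u
  have hev_nonneg : ∀ i, 0 ≤ ev i := by
    intro i
    simpa [B, hT.apply_eigenvectorBasis, real_inner_smul_right,
      (hT.eigenvectorBasis rfl).orthonormal.1 i] using hpos (B i)
  have hev_le : ∀ i, ev i ≤ μ := fun i => hμ _ (hT.hasEigenvalue_eigenvalues rfl i)
  rw [← B.repr.norm_map, ← B.repr.inner_map_map, EuclideanSpace.real_norm_sq_eq, PiLp.inner_apply,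
    Finset.mul_sum]
  refine Finset.sum_le_sum fun i _ => ?_
  rw [hrepr, RCLike.inner_apply, conj_trivial]
  have := mul_le_mul_of_nonneg_right (hev_le i) (mul_nonneg (hev_nonneg i) (sq_nonneg (B.repr u i)))
  nlinarith

section Cones

variable {K : Set E} {x u p : E}

theorem IsProjOn.inner_sub_nonpos (hK : Convex ℝ K) (h : IsProjOn K u p) {v : E} (hv : v ∈ K) :
    ⟪u - p, v - p⟫_ℝ ≤ 0 := by
  have : Nonempty K := ⟨⟨p, h.1⟩⟩
  have hbdd : BddBelow (Set.range fun w : K => ‖u - w‖) := ⟨0, by rintro _ ⟨w, rfl⟩; positivity⟩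
  have hinf : ‖u - p‖ = ⨅ w : K, ‖u - w‖ :=
    le_antisymm (le_ciInf fun w => h.2 w w.2) (ciInf_le hbdd ⟨p, h.1⟩)
  exact (norm_eq_iInf_iff_real_inner_le_zero hK h.1).1 hinf v hv

theorem IsProjOn.inner_eq_zero_and_forall_inner_nonpos_of_cone {C : Set E} (hC : Convex ℝ C)
    (h0 : (0 : E) ∈ C) (hsmul : ∀ c : ℝ, 0 < c → ∀ v ∈ C, c • v ∈ C) (h : IsProjOn C u p) :
    ⟪u - p, p⟫_ℝ = 0 ∧ ∀ v ∈ C, ⟪u - p, v⟫_ℝ ≤ 0 := by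
  have hzero := h.inner_sub_nonpos hC h0
  have htwo := h.inner_sub_nonpos hC (hsmul 2 two_pos p h.1)
  rw [zero_sub, inner_neg_right] at hzero
  rw [show (2 : ℝ) • p - p = p by module] at htwo
  have horth : ⟪u - p, p⟫_ℝ = 0 := by linarith
  refine ⟨horth, fun v hv => ?_⟩
  have := h.inner_sub_nonpos hC hv
  rwa [inner_sub_right, horth, sub_zero] at this

theorem sub_mem_tangentCone {y : E} (hy : y ∈ K) : y - x ∈ tangentCone K x :=
  subset_closure ⟨1, one_pos, by simpa using hy⟩

theorem smul_mem_tangentCone {c : ℝ} (hc : 0 < c) {v : E} (hv : v ∈ tangentCone K x) :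
    c • v ∈ tangentCone K x := by
  refine map_mem_closure (continuous_const_smul c) hv ?_
  rintro d ⟨t, ht, hd⟩
  exact ⟨t / c, by positivity, by rwa [smul_smul, div_mul_cancel₀ _ hc.ne']⟩

theorem convex_tangentCone (hK : Convex ℝ K) (hx : x ∈ K) : Convex ℝ (tangentCone K x) := by
  refine Convex.closure ?_
  have hshorten : ∀ {d : E} {t m : ℝ}, 0 < m → m ≤ t → x + t • d ∈ K → x + m • d ∈ K := by
    intro d t m hm hmt hd
    have ht : 0 < t := hm.trans_le hmt
    have := hK.add_smul_mem hx hd ⟨div_nonneg hm.le ht.le, (div_le_one ht).2 hmt⟩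
    rwa [smul_smul, div_mul_cancel₀ _ ht.ne'] at this
  rintro d₁ ⟨t₁, ht₁, h₁⟩ d₂ ⟨t₂, ht₂, h₂⟩ s r hs hr hsr
  -- both directions are feasible with the common step `min t₁ t₂`
  set m := min t₁ t₂
  have hm : 0 < m := lt_min ht₁ ht₂
  refine ⟨m, hm, ?_⟩
  have hcomb : s • (x + m • d₁) + r • (x + m • d₂) = (s + r) • x + m • (s • d₁ + r • d₂) := by
    module
  rw [hsr, one_smul] at hcomb
  rw [← hcomb]
  exact hK (hshorten hm (min_le_left _ _) h₁) (hshorten hm (min_le_right _ _) h₂) hs hr hsr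

theorem IsProjOn.inner_eq_zero_and_forall_inner_nonpos_of_tangentCone (hK : Convex ℝ K)
    (hx : x ∈ K) (h : IsProjOn (tangentCone K x) u p) :
    ⟪u - p, p⟫_ℝ = 0 ∧ ∀ v ∈ tangentCone K x, ⟪u - p, v⟫_ℝ ≤ 0 :=
  h.inner_eq_zero_and_forall_inner_nonpos_of_cone (convex_tangentCone hK hx)
    (by simpa using sub_mem_tangentCone (x := x) hx) fun _ hc _ hv => smul_mem_tangentCone hc hv

end Cones

theorem ae_differentiableWithinAt_of_abs_sub_le {φ G : ℝ → ℝ} {s : Set ℝ}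
    (h : ∀ a ∈ s, ∀ b ∈ s, a ≤ b → |φ b - φ a| ≤ G b - G a) :
    ∀ᵐ t, t ∈ s → DifferentiableWithinAt ℝ φ s t := by
  have hG : MonotoneOn G s := fun a ha b hb hab => by
    linarith [abs_nonneg (φ b - φ a), h a ha b hb hab]
  have hGφ : MonotoneOn (G - φ) s := fun a ha b hb hab => by
    simp only [Pi.sub_apply]
    linarith [le_abs_self (φ b - φ a), h a ha b hb hab]
  filter_upwards [hG.ae_differentiableWithinAt_of_mem, hGφ.ae_differentiableWithinAt_of_mem]
    with t hGt hGφt ht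
  simpa using (hGt ht).sub (hGφt ht)

section LocAC

variable {V : Type*} [NormedAddCommGroup V] [NormedSpace ℝ V] [CompleteSpace V] {φ : ℝ → V}

theorem LocAC.norm_sub_le (hφ : LocAC φ) {s t : ℝ} (hs : 0 ≤ s) (hst : s ≤ t) :
    ‖φ t - φ s‖ ≤ (∫ τ in 0..t, ‖deriv φ τ‖) - ∫ τ in 0..s, ‖deriv φ τ‖ := by
  have hint : ∀ b, 0 ≤ b → IntervalIntegrable (fun τ => ‖deriv φ τ‖) volume 0 b := fun b hb =>
    ((intervalIntegrable_iff_integrableOn_Icc_of_le hb).2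
      (hφ.2.1.integrableOn_compact_subset (fun τ hτ => hτ.1) isCompact_Icc)).norm
  rw [intervalIntegral.integral_interval_sub_left (hint t (hs.trans hst)) (hint s hs),
    hφ.2.2 s t hs hst]
  exact intervalIntegral.norm_integral_le_integral_norm hst

theorem LocAC.ae_differentiableAt_comp [ProperSpace V] {g : V → ℝ} (hφ : LocAC φ)
    (hg : LocallyLipschitz g) :
    ∀ᵐ t ∂volume.restrict (Set.Ici 0), DifferentiableAt ℝ (fun τ => g (φ τ)) t := by
  set I : ℝ → ℝ := fun t => ∫ τ in 0..t, ‖deriv φ τ‖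
  have hlocal : ∀ N : ℕ, ∀ᵐ t, t ∈ Set.Ioo (0 : ℝ) N → DifferentiableAt ℝ (fun τ => g (φ τ)) t := by
    intro N
    have hball : Set.MapsTo φ (Set.Icc 0 N) (Metric.closedBall (φ 0) (I N)) := fun t ht => by
      have h0t := hφ.norm_sub_le le_rfl ht.1
      have htN := hφ.norm_sub_le ht.1 ht.2
      have hI0 : I 0 = 0 := intervalIntegral.integral_same
      rw [Metric.mem_closedBall, dist_eq_norm]
      linarith [norm_nonneg (φ N - φ t)]
    obtain ⟨K, hK⟩ := (hg.locallyLipschitzOn (s := Metric.closedBall (φ 0) (I N))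
      ).exists_lipschitzOnWith_of_compact (isCompact_closedBall _ _)
    have hdom : ∀ a ∈ Set.Ioo (0 : ℝ) N, ∀ b ∈ Set.Ioo (0 : ℝ) N, a ≤ b →
        |g (φ b) - g (φ a)| ≤ K * I b - K * I a := by
      intro a ha b hb hab
      calc |g (φ b) - g (φ a)| ≤ K * ‖φ b - φ a‖ := by
            rw [← Real.dist_eq, ← dist_eq_norm]
            exact hK.dist_le_mul _ (hball (Set.Ioo_subset_Icc_self hb)) _
              (hball (Set.Ioo_subset_Icc_self ha))
        _ ≤ K * (I b - I a) := mul_le_mul_of_nonneg_left (hφ.norm_sub_le ha.1.le hab) K.coe_nonneg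
        _ = K * I b - K * I a := by ring
    filter_upwards [ae_differentiableWithinAt_of_abs_sub_le hdom] with t ht hmem
    exact (ht hmem).differentiableAt (isOpen_Ioo.mem_nhds hmem)
  rw [Measure.restrict_congr_set Ioi_ae_eq_Ici.symm, ae_restrict_iff' measurableSet_Ioi]
  filter_upwards [ae_all_iff.2 hlocal] with t ht htpos
  obtain ⟨N, hN⟩ := exists_nat_gt t
  exact ht N ⟨htpos, hN⟩

end LocAC

theorem hasDerivAt_comp_of_mem_subdiff {F : E → ℝ} {x : ℝ → E} {t : ℝ} {g p : E}
    (hFx : DifferentiableAt ℝ (fun τ => F (x τ)) t) (hx : HasDerivAt x p t)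
    (hg : g ∈ subdiff F (x t)) : HasDerivAt (fun τ => F (x τ)) ⟪g, p⟫_ℝ t := by
  have hd := hFx.hasDerivAt
  have hψ : HasDerivAt (fun τ => F (x τ) - ⟪g, x τ⟫_ℝ) (deriv (fun τ => F (x τ)) t - ⟪g, p⟫_ℝ) t :=
    hd.sub ((innerSL ℝ g).hasFDerivAt.comp_hasDerivAt t hx)
  have hmin : IsLocalMin (fun τ => F (x τ) - ⟪g, x τ⟫_ℝ) t :=
    Filter.Eventually.of_forall fun τ => by
      have := hg (x τ)
      rw [inner_sub_right] at this
      linarith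
  have := hmin.hasDerivAt_eq_zero hψ
  rwa [show deriv (fun τ => F (x τ)) t = ⟪g, p⟫_ℝ by linarith] at hd

section Lyapunov

variable {F : E → ℝ} {L : E →ₗ[ℝ] E} {K : Set E} {α μ k : ℝ} {X Λ xs lams g gs p : E}

theorem inner_sub_add_inner_sub_le (hL : L.IsSymmetric) (hK : Convex ℝ K) (hX : X ∈ K)
    (hxs : xs ∈ K) (hLxs : L xs = 0)
    (hproj : IsProjOn (tangentCone K X) (-(α • L X) - α • L Λ - g) p)
    (hg : g ∈ subdiff F X) (hgs : gs ∈ subdiff F xs)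
    (hnormal : -gs - α • L lams ∈ normalCone K xs) :
    ⟪X - xs, p⟫_ℝ + ⟪Λ - lams, α • L X⟫_ℝ ≤ -(α * ⟪X, L X⟫_ℝ) := by
  have hvi := (hproj.inner_eq_zero_and_forall_inner_nonpos_of_tangentCone hK hX).2 _
    (sub_mem_tangentCone hxs)
  have hgX := hg xs
  have hgxs := hgs X
  have hnor := hnormal X hX
  have hLX : ⟪L X, xs⟫_ℝ = 0 := by rw [hL, hLxs, inner_zero_right]
  have hLΛ : ⟪L Λ, xs⟫_ℝ = 0 := by rw [hL, hLxs, inner_zero_right]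
  have hLlams : ⟪L lams, xs⟫_ℝ = 0 := by rw [hL, hLxs, inner_zero_right]
  simp only [inner_sub_left, inner_sub_right, inner_neg_left, real_inner_smul_left,
    real_inner_smul_right, hLX, hLΛ, hLlams] at hvi hgX hgxs hnor ⊢
  rw [← hL Λ, ← hL lams, real_inner_comm p X, real_inner_comm p xs, real_inner_comm (L X) X]
  linear_combination hvi + hgX + hgxs + hnor

theorem lyapunov_deriv_le (hL : L.IsSymmetric) (hspec : ‖L X‖ ^ 2 ≤ μ * ⟪X, L X⟫_ℝ)
    (hαμ : 0 < α * μ) (hK : Convex ℝ K) (hX : X ∈ K) (hxs : xs ∈ K) (hLxs : L xs = 0)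
    (hproj : IsProjOn (tangentCone K X) (-(α • L X) - α • L Λ - g) p)
    (hg : g ∈ subdiff F X) (hgs : gs ∈ subdiff F xs)
    (hnormal : -gs - α • L lams ∈ normalCone K xs) :
    ⟪X - xs, p⟫_ℝ + ⟪Λ - lams, α • L X⟫_ℝ +
        k * (⟪g, p⟫_ℝ + α * ⟪L X, p⟫_ℝ + α * ⟪L Λ, p⟫_ℝ + α * ⟪L X, α • L X⟫_ℝ) ≤
      -(k * ‖p‖ ^ 2) - (1 / (α * μ) - k) * ‖α • L X‖ ^ 2 := by
  have hV1 := inner_sub_add_inner_sub_le hL hK hX hxs hLxs hproj hg hgs hnormal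
  have hmoreau := (hproj.inner_eq_zero_and_forall_inner_nonpos_of_tangentCone hK hX).1
  rw [inner_sub_left, inner_sub_left, inner_sub_left, inner_neg_left, real_inner_smul_left,
    real_inner_smul_left, real_inner_self_eq_norm_sq] at hmoreau
  have hnorm : α * ⟪L X, α • L X⟫_ℝ = ‖α • L X‖ ^ 2 := by
    rw [← real_inner_self_eq_norm_sq, real_inner_smul_left]
  have hspec' : 1 / (α * μ) * ‖α • L X‖ ^ 2 ≤ α * ⟪X, L X⟫_ℝ := by
    rw [div_mul_eq_mul_div, one_mul, div_le_iff₀ hαμ]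
    calc ‖α • L X‖ ^ 2 = α ^ 2 * ‖L X‖ ^ 2 := by rw [norm_smul, mul_pow, Real.norm_eq_abs, sq_abs]
      _ ≤ α ^ 2 * (μ * ⟪X, L X⟫_ℝ) := mul_le_mul_of_nonneg_left hspec (sq_nonneg α)
      _ = α * ⟪X, L X⟫_ℝ * (α * μ) := by ring
  have hV2 : ⟪g, p⟫_ℝ + α * ⟪L X, p⟫_ℝ + α * ⟪L Λ, p⟫_ℝ + α * ⟪L X, α • L X⟫_ℝ =
      ‖α • L X‖ ^ 2 - ‖p‖ ^ 2 := by
    linarith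
  rw [hV2]
  linarith

end Lyapunov

section Laplacian

variable {n q : ℕ} {a : Fin n → Fin n → ℝ}

theorem lap_mulVec_apply (v : Fin n → ℝ) (i : Fin n) :
    (lap n a *ᵥ v) i = ∑ k, a i k * (v i - v k) := by
  simp only [mulVec, dotProduct, lap, of_apply]
  rw [← Finset.add_sum_erase _ _ (Finset.mem_univ i), if_pos rfl,
    ← Finset.add_sum_erase _ (fun k => a i k * (v i - v k)) (Finset.mem_univ i),
    sub_self, mul_zero, zero_add, Finset.sum_mul, ← Finset.sum_add_distrib]
  refine Finset.sum_congr rfl fun k hk => ?_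
  rw [if_neg (Finset.ne_of_mem_erase hk).symm]
  ring

theorem dotProduct_lap_mulVec_nonneg (hsymm : ∀ i j, a i j = a j i) (hnn : ∀ i j, 0 ≤ a i j)
    (v : Fin n → ℝ) : 0 ≤ v ⬝ᵥ (lap n a *ᵥ v) := by
  have hexpand : v ⬝ᵥ (lap n a *ᵥ v) = ∑ i, ∑ k, a i k * (v i * (v i - v k)) := by
    simp only [dotProduct, lap_mulVec_apply, Finset.mul_sum]
    exact Finset.sum_congr rfl fun i _ => Finset.sum_congr rfl fun k _ => by ring
  have hswap : ∑ i, ∑ k, a i k * (v i * (v i - v k)) = ∑ i, ∑ k, a i k * (v k * (v k - v i)) := by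
    rw [Finset.sum_comm]
    simp only [hsymm]
  have hsq : 2 * (v ⬝ᵥ (lap n a *ᵥ v)) = ∑ i, ∑ k, a i k * (v i - v k) ^ 2 := by
    rw [two_mul, hexpand]
    nth_rewrite 2 [hswap]
    rw [← Finset.sum_add_distrib]
    refine Finset.sum_congr rfl fun i _ => ?_
    rw [← Finset.sum_add_distrib]
    exact Finset.sum_congr rfl fun k _ => by ring
  have : 0 ≤ ∑ i, ∑ k, a i k * (v i - v k) ^ 2 :=
    Finset.sum_nonneg fun i _ => Finset.sum_nonneg fun k _ => mul_nonneg (hnn i k) (sq_nonneg _)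
  linarith

theorem Lmap_apply (u : EuclideanSpace ℝ (Fin n × Fin q)) (i : Fin n) (j : Fin q) :
    Lmap n q a u (i, j) = (lap n a *ᵥ fun i' => u (i', j)) i := by
  simp only [Lmap, Matrix.toLpLin_apply, mulVec, dotProduct, bigL, kroneckerMap_apply,
    one_apply, Fintype.sum_prod_type, mul_ite, mul_one, mul_zero, ite_mul, zero_mul,
    Finset.sum_ite_eq, Finset.mem_univ, if_true]

theorem Lmap_isSymmetric (hsymm : ∀ i j, a i j = a j i) : (Lmap n q a).IsSymmetric := by
  rw [Lmap, Matrix.isSymmetric_toEuclideanLin_iff]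
  refine Matrix.IsHermitian.ext fun ⟨i, j⟩ ⟨i', j'⟩ => ?_
  by_cases hi : i = i' <;> by_cases hj : j = j' <;>
    simp [bigL, lap, one_apply, hi, hj, hsymm i i', eq_comm]

theorem inner_Lmap_self_nonneg (hsymm : ∀ i j, a i j = a j i) (hnn : ∀ i j, 0 ≤ a i j)
    (u : EuclideanSpace ℝ (Fin n × Fin q)) : 0 ≤ ⟪u, Lmap n q a u⟫_ℝ := by
  have : ⟪u, Lmap n q a u⟫_ℝ = ∑ j, (fun i => u (i, j)) ⬝ᵥ (lap n a *ᵥ fun i => u (i, j)) := by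
    simp only [PiLp.inner_apply, RCLike.inner_apply, conj_trivial, Fintype.sum_prod_type,
      Lmap_apply, dotProduct]
    rw [Finset.sum_comm]
    exact Finset.sum_congr rfl fun j _ => Finset.sum_congr rfl fun i _ => mul_comm _ _
  rw [this]
  exact Finset.sum_nonneg fun j _ => dotProduct_lap_mulVec_nonneg hsymm hnn _

theorem hasEigenvalue_Lmap_le {μ ν : ℝ}
    (hμmax : ∀ μ' : ℝ, (∃ v : Fin n → ℝ, v ≠ 0 ∧ (lap n a).mulVec v = μ' • v) → μ' ≤ μ)
    (hν : Module.End.HasEigenvalue (Lmap n q a) ν) : ν ≤ μ := by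
  obtain ⟨u, hu⟩ := hν.exists_hasEigenvector
  obtain ⟨⟨i, j⟩, hij⟩ : ∃ p, u p ≠ 0 := by
    by_contra! h
    exact hu.2 (by ext p; exact h p)
  refine hμmax ν ⟨fun i' => u (i', j), fun h => hij (congrFun h i), funext fun i' => ?_⟩
  simpa [Lmap_apply] using congrArg (fun w => w (i', j)) hu.apply_eq_smul

end Laplacian

theorem convexOn_bigF {n q : ℕ} {f : Fin n → EuclideanSpace ℝ (Fin q) → ℝ}
    (hfconv : ∀ i, ConvexOn ℝ Set.univ (f i)) : ConvexOn ℝ Set.univ (bigF n q f) := by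
  refine ⟨convex_univ, fun x _ y _ s r hs hr hsr => ?_⟩
  have hblk : ∀ i, blk (s • x + r • y) i = s • blk x i + r • blk y i := fun i => rfl
  simp only [bigF, hblk, smul_eq_mul, Finset.mul_sum, ← Finset.sum_add_distrib]
  exact Finset.sum_le_sum fun i _ => (hfconv i).2 trivial trivial hs hr hsr

theorem hasDerivAt_V1aux (xs lams : E) {x lam : ℝ → E} {p l : E} {t : ℝ} (hx : HasDerivAt x p t)
    (hlam : HasDerivAt lam l t) :
    HasDerivAt (fun τ => V1aux xs lams (x τ) (lam τ))
      (⟪x t - xs, p⟫_ℝ + ⟪lam t - lams, l⟫_ℝ) t := by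
  refine (((hx.sub_const xs).norm_sq.const_mul (1 / 2)).add
    ((hlam.sub_const lams).norm_sq.const_mul (1 / 2))).congr_deriv ?_
  ring

theorem hasDerivAt_V2aux {n q : ℕ} (α : ℝ) {a : Fin n → Fin n → ℝ}
    {f : Fin n → EuclideanSpace ℝ (Fin q) → ℝ} (xs : EuclideanSpace ℝ (Fin n × Fin q))
    {x lam : ℝ → EuclideanSpace ℝ (Fin n × Fin q)} {p l g : EuclideanSpace ℝ (Fin n × Fin q)}
    {t : ℝ} (hL : (Lmap n q a).IsSymmetric) (hx : HasDerivAt x p t) (hlam : HasDerivAt lam l t)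
    (hF : HasDerivAt (fun τ => bigF n q f (x τ)) ⟪g, p⟫_ℝ t) :
    HasDerivAt (fun τ => V2aux n q α a f xs (x τ) (lam τ))
      (⟪g, p⟫_ℝ + α * ⟪Lmap n q a (x t), p⟫_ℝ + α * ⟪Lmap n q a (lam t), p⟫_ℝ +
        α * ⟪Lmap n q a (x t), l⟫_ℝ) t := by
  set T := LinearMap.toContinuousLinearMap (Lmap n q a)
  have hxLx := hx.inner ℝ (T.hasFDerivAt.comp_hasDerivAt t hx)
  have hxLlam := hx.inner ℝ (T.hasFDerivAt.comp_hasDerivAt t hlam)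
  refine (((hF.sub_const (bigF n q f xs)).add (hxLx.const_mul (α / 2))).add
    (hxLlam.const_mul α)).congr_deriv ?_
  simp only [T, Function.comp_apply, LinearMap.coe_toContinuousLinearMap', ← hL (x t),
    real_inner_comm p]
  ring

theorem inner_toEuclideanLin_diagonal_const {ι : Type*} [Fintype ι] [DecidableEq ι] (c : ℝ)
    (v : EuclideanSpace ℝ ι) : ⟪v, toEuclideanLin (diagonal fun _ => c) v⟫_ℝ = c * ‖v‖ ^ 2 := by
  have : toEuclideanLin (diagonal fun _ : ι => c) v = c • v := by
    ext i
    simp [toLpLin_apply]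
  rw [this, real_inner_smul_right, real_inner_self_eq_norm_sq]

theorem stmt8_general
    (n q : ℕ) (α : ℝ) (hα : 0 < α)
    (a : Fin n → Fin n → ℝ)
    (hsymm : ∀ i j, a i j = a j i) (hnn : ∀ i j, 0 ≤ a i j)
    (f : Fin n → EuclideanSpace ℝ (Fin q) → ℝ)
    (hfconv : ∀ i, ConvexOn ℝ Set.univ (f i))
    (Ω : Fin n → Set (EuclideanSpace ℝ (Fin q)))
    (hΩcv : ∀ i, Convex ℝ (Ω i))
    (x lam : ℝ → EuclideanSpace ℝ (Fin n × Fin q))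
    (hxac : LocAC x) (hlamac : LocAC lam)
    (hxΩ : ∀ t : ℝ, 0 ≤ t → x t ∈ prodSet n q Ω)
    (hdyn : ∀ᵐ t ∂(volume.restrict (Set.Ici (0:ℝ))),
      (∃ g ∈ subdiff (bigF n q f) (x t),
        IsProjOn (tangentCone (prodSet n q Ω) (x t))
          (-(α • Lmap n q a (x t)) - α • Lmap n q a (lam t) - g) (deriv x t)) ∧
      deriv lam t = α • Lmap n q a (x t))
    (xs lams : EuclideanSpace ℝ (Fin n × Fin q))
    (hxsΩ : xs ∈ prodSet n q Ω) (hLxs : Lmap n q a xs = 0)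
    (hopt : ∃ gs ∈ subdiff (bigF n q f) xs,
      -gs - α • Lmap n q a lams ∈ normalCone (prodSet n q Ω) xs)
    (μ : ℝ)
    (hμmax : ∀ μ' : ℝ, (∃ v : Fin n → ℝ, v ≠ 0 ∧ (lap n a).mulVec v = μ' • v) → μ' ≤ μ)
    (k : ℝ) (hk0 : 0 < k) (hk1 : k < 1 / (α * μ))
    :
    ∃ Q : Matrix (Fin n × Fin q) (Fin n × Fin q) ℝ, Q.IsSymm ∧ Q.PosDef ∧
      ∀ᵐ t ∂(volume.restrict (Set.Ici (0:ℝ))),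
        DifferentiableAt ℝ
          (fun τ => V1aux xs lams (x τ) (lam τ) + k * V2aux n q α a f xs (x τ) (lam τ)) t ∧
        deriv (fun τ => V1aux xs lams (x τ) (lam τ) + k * V2aux n q α a f xs (x τ) (lam τ)) t ≤
          -(k * ‖deriv x t‖^2) -
            (inner ℝ (deriv lam t) (Matrix.toEuclideanLin Q (deriv lam t)) : ℝ) ∧
        -(k * ‖deriv x t‖^2) -
            (inner ℝ (deriv lam t) (Matrix.toEuclideanLin Q (deriv lam t)) : ℝ) ≤ 0 := by
  have hμ : 0 < μ := by
    by_contra! hμ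
    linarith [one_div_nonpos.2 (mul_nonpos_of_nonneg_of_nonpos hα.le hμ)]
  obtain ⟨gs, hgs, hnormal⟩ := hopt
  have hL := Lmap_isSymmetric (q := q) hsymm
  have hspec := hL.norm_apply_sq_le (inner_Lmap_self_nonneg hsymm hnn)
    fun _ => hasEigenvalue_Lmap_le hμmax
  have hΩ : Convex ℝ (prodSet n q Ω) := fun u hu v hv s r hs hr hsr i =>
    hΩcv i (hu i) (hv i) hs hr hsr
  refine ⟨diagonal fun _ => 1 / (α * μ) - k, isSymm_diagonal _,
    PosDef.diagonal fun _ => by linarith, ?_⟩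
  filter_upwards [hdyn, hxac.1, hlamac.1, ae_restrict_mem measurableSet_Ici,
    hxac.ae_differentiableAt_comp (convexOn_bigF hfconv).locallyLipschitz]
    with t ⟨⟨g, hg, hproj⟩, hl⟩ hxt hlamt ht hFt
  have hF := hasDerivAt_comp_of_mem_subdiff hFt hxt.hasDerivAt hg
  have hV : HasDerivAt
      (fun τ => V1aux xs lams (x τ) (lam τ) + k * V2aux n q α a f xs (x τ) (lam τ)) _ t :=
    (hasDerivAt_V1aux xs lams hxt.hasDerivAt hlamt.hasDerivAt).add
    ((hasDerivAt_V2aux α xs hL hxt.hasDerivAt hlamt.hasDerivAt hF).const_mul k)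
  rw [inner_toEuclideanLin_diagonal_const]
  refine ⟨hV.differentiableAt, ?_, ?_⟩
  · rw [hV.deriv, hl]
    exact lyapunov_deriv_le hL (hspec _) (mul_pos hα hμ) hΩ (hxΩ t ht) hxsΩ hLxs hproj hg hgs
      hnormal
  · have hc : 0 ≤ 1 / (α * μ) - k := by linarith
    linarith [mul_nonneg hk0.le (sq_nonneg ‖deriv x t‖), mul_nonneg hc (sq_nonneg ‖deriv lam t‖)]

/-- there is a symmetric positive definite Q with
d/dt V*(x(t), λ(t)) ≤ −k‖ẋ(t)‖² − ⟨λ̇(t), Qλ̇(t)⟩ ≤ 0 a.e. -/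
theorem stmt8
    (n q : ℕ) (hn : 2 ≤ n) (hq : 1 ≤ q) (α : ℝ) (hα : 0 < α)
    (a : Fin n → Fin n → ℝ)
    (hsymm : ∀ i j, a i j = a j i) (hnn : ∀ i j, 0 ≤ a i j) (hdiag : ∀ i, a i i = 0)
    (hconn : (SimpleGraph.fromRel fun i j => 0 < a i j).Connected)
    (f : Fin n → EuclideanSpace ℝ (Fin q) → ℝ)
    (hfconv : ∀ i, ConvexOn ℝ Set.univ (f i)) (hfcont : ∀ i, Continuous (f i))
    (Ω : Fin n → Set (EuclideanSpace ℝ (Fin q)))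
    (hΩne : ∀ i, (Ω i).Nonempty) (hΩcl : ∀ i, IsClosed (Ω i)) (hΩcv : ∀ i, Convex ℝ (Ω i))
    (hint : (⋂ i, interior (Ω i)).Nonempty)
    (x lam : ℝ → EuclideanSpace ℝ (Fin n × Fin q))
    (hxac : LocAC x) (hlamac : LocAC lam)
    (hxΩ : ∀ t : ℝ, 0 ≤ t → x t ∈ prodSet n q Ω)
    (hdyn : ∀ᵐ t ∂(volume.restrict (Set.Ici (0:ℝ))),
      (∃ g ∈ subdiff (bigF n q f) (x t),
        IsProjOn (tangentCone (prodSet n q Ω) (x t))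
          (-(α • Lmap n q a (x t)) - α • Lmap n q a (lam t) - g) (deriv x t)) ∧
      deriv lam t = α • Lmap n q a (x t))
    (xs lams : EuclideanSpace ℝ (Fin n × Fin q))
    (hxsΩ : xs ∈ prodSet n q Ω) (hLxs : Lmap n q a xs = 0)
    (hopt : ∃ gs ∈ subdiff (bigF n q f) xs,
      -gs - α • Lmap n q a lams ∈ normalCone (prodSet n q Ω) xs)
    (μ : ℝ)
    (hμeig : ∃ v : Fin n → ℝ, v ≠ 0 ∧ (lap n a).mulVec v = μ • v)
    (hμmax : ∀ μ' : ℝ, (∃ v : Fin n → ℝ, v ≠ 0 ∧ (lap n a).mulVec v = μ' • v) → μ' ≤ μ)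
    (k : ℝ) (hk0 : 0 < k) (hk1 : k < 1 / (α * μ))
    :
    ∃ Q : Matrix (Fin n × Fin q) (Fin n × Fin q) ℝ, Q.IsSymm ∧ Q.PosDef ∧
      ∀ᵐ t ∂(volume.restrict (Set.Ici (0:ℝ))),
        DifferentiableAt ℝ
          (fun τ => V1aux xs lams (x τ) (lam τ) + k * V2aux n q α a f xs (x τ) (lam τ)) t ∧
        deriv (fun τ => V1aux xs lams (x τ) (lam τ) + k * V2aux n q α a f xs (x τ) (lam τ)) t ≤
          -(k * ‖deriv x t‖^2) -
            (inner ℝ (deriv lam t) (Matrix.toEuclideanLin Q (deriv lam t)) : ℝ) ∧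
        -(k * ‖deriv x t‖^2) -
            (inner ℝ (deriv lam t) (Matrix.toEuclideanLin Q (deriv lam t)) : ℝ) ≤ 0 :=
  stmt8_general n q α hα a hsymm hnn f hfconv Ω hΩcv x lam hxac hlamac hxΩ hdyn xs lams hxsΩ hLxs
    hopt μ hμmax k hk0 hk1

end
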